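/- In the two-constant term algebra, the constant a is the unique term t satisfying both: (i) there is no term u with u ≤ t and u ≠ t, and (ii) there are no terms y, z with t ≤ y, t ≠ y, y ≤ z, and y ≠ z. That is, for every term t, (¬∃ u, u ≤ t ∧ u ≠ t) ∧ (¬∃ y z, t ≤ y ∧ t ≠ y ∧ y ≤ z ∧ y ≠ z) holds if and only if t = a. -/
import Mathlib


/-- Terms of the two-constant term algebra: constants `a`, `b` and a binary
constructor `g`. -/
inductive Term : Type
  | a : Term
  | b : Term
  | g (t₁ t₂ : Term) : Term
deriving DecidableEq

/-- The structural subtype order on terms: `a ≤ a`, `a ≤ b`, `b ≤ b`, and `g` is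
covariant in both arguments. -/
inductive Term.le : Term → Term → Prop
  | aa : Term.le Term.a Term.a
  | ab : Term.le Term.a Term.b
  | bb : Term.le Term.b Term.b
  | gg {s₁ s₂ t₁ t₂ : Term} : Term.le s₁ t₁ → Term.le s₂ t₂ →
      Term.le (Term.g s₁ s₂) (Term.g t₁ t₂)

instance : LE Term := ⟨Term.le⟩

/-- Shapes: a constant `cs` and a binary constructor `gs`. -/
inductive Shape : Type
  | cs : Shape
  | gs (s₁ s₂ : Shape) : Shape
deriving DecidableEq

/-- The shape of a term. -/
def Term.shape : Term → Shape
  | Term.a => Shape.cs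
  | Term.b => Shape.cs
  | Term.g t₁ t₂ => Shape.gs t₁.shape t₂.shape


/-- Replace all constants by `a`. -/
def Term.toA : Term → Term
  | Term.a => Term.a
  | Term.b => Term.a
  | Term.g t₁ t₂ => Term.g t₁.toA t₂.toA

/-- Replace all constants by `b`. -/
def Term.toB : Term → Term
  | Term.a => Term.b
  | Term.b => Term.b
  | Term.g t₁ t₂ => Term.g t₁.toB t₂.toB

theorem Term.le_refl : ∀ t : Term, Term.le t t
  | Term.a => Term.le.aa
  | Term.b => Term.le.bb
  | Term.g t₁ t₂ => Term.le.gg t₁.le_refl t₂.le_refl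

theorem Term.toA_le : ∀ t : Term, Term.le t.toA t
  | Term.a => Term.le.aa
  | Term.b => Term.le.ab
  | Term.g t₁ t₂ => Term.le.gg t₁.toA_le t₂.toA_le

theorem Term.le_toB : ∀ t : Term, Term.le t t.toB
  | Term.a => Term.le.ab
  | Term.b => Term.le.bb
  | Term.g t₁ t₂ => Term.le.gg t₁.le_toB t₂.le_toB

theorem Term.toA_ne_toB : ∀ t : Term, t.toA ≠ t.toB
  | Term.a => by simp [Term.toA, Term.toB]
  | Term.b => by simp [Term.toA, Term.toB]
  | Term.g t₁ t₂ => by simp [Term.toA, Term.toB]; intro h; exact absurd h t₁.toA_ne_toB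

/-- The constant `a` is the unique term `t` such that (i) no term is strictly below
`t`, and (ii) there is no strictly increasing chain of length two above `t`. -/
theorem eq_a_iff_minimal_no_chain (t : Term) :
    ((¬ ∃ u : Term, u ≤ t ∧ u ≠ t) ∧
      (¬ ∃ y z : Term, t ≤ y ∧ t ≠ y ∧ y ≤ z ∧ y ≠ z)) ↔ t = Term.a := by
  constructor
  · rintro ⟨h1, h2⟩
    match t with
    | Term.a => rfl
    | Term.b => exact absurd ⟨Term.a, Term.le.ab, by simp⟩ h1
    | Term.g t₁ t₂ =>
      by_cases hA : (Term.g t₁ t₂).toA = Term.g t₁ t₂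
      · exfalso
        simp only [Term.toA, Term.g.injEq] at hA
        obtain ⟨hA1, hA2⟩ := hA
        refine h2 ⟨Term.g t₁.toB t₂, Term.g t₁.toB t₂.toB,
          Term.le.gg t₁.le_toB t₂.le_refl, ?_,
          Term.le.gg t₁.toB.le_refl t₂.le_toB, ?_⟩
        · simp only [ne_eq, Term.g.injEq, not_and]
          intro h _; exact t₁.toA_ne_toB (hA1.trans h)
        · simp only [ne_eq, Term.g.injEq, not_and]
          intro _ h; exact t₂.toA_ne_toB (hA2.trans h)
      · exact absurd ⟨(Term.g t₁ t₂).toA, (Term.g t₁ t₂).toA_le, hA⟩ h1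
  · rintro rfl
    refine ⟨?_, ?_⟩
    · rintro ⟨u, hu, hne⟩
      cases hu; exact hne rfl
    · rintro ⟨y, z, hy, hny, hz, hnz⟩
      cases hy
      · exact hny rfl
      · cases hz; exact hnz rfl
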